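/- arXiv:2505.00701 — 3 statements merged into one kernel-verified Lean document; each statement's English description precedes it below -/
import Mathlib

section
/- Let U be a unitary and Ũ a unitary with ‖Ũ − U‖_F² / dim H ≤ ε on a finite-dimensional Hilbert space H. Let d be a unitary 1-design on H. For each unitary V define V̂ = U V U†. Then for every unit vector ψ, E_{V∼d}[‖V̂† Ũ V ψ − U ψ‖²] ≤ ε. -/
open Matrix Finset

lemma trace_mul_vecMulVec {n : ℕ} (N : Matrix (Fin n) (Fin n) ℂ) (ψ : Fin n → ℂ) :
    (N * vecMulVec ψ (star ψ)).trace = star ψ ⬝ᵥ N.mulVec ψ := by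
  simp only [Matrix.trace, Matrix.diag, Matrix.mul_apply, vecMulVec_apply, dotProduct,
    Matrix.mulVec, Pi.star_apply]
  refine Finset.sum_congr rfl fun k _ => ?_
  rw [Finset.mul_sum]
  exact Finset.sum_congr rfl fun j _ => by ring

lemma norm_sq_mulVec {n : ℕ} (B : Matrix (Fin n) (Fin n) ℂ) (ψ : Fin n → ℂ) :
    ∑ j, ‖B.mulVec ψ j‖ ^ 2 = (star ψ ⬝ᵥ ((Bᴴ * B).mulVec ψ)).re := by
  have h1 : star ψ ⬝ᵥ ((Bᴴ * B).mulVec ψ) = star (B.mulVec ψ) ⬝ᵥ B.mulVec ψ := by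
    rw [← Matrix.mulVec_mulVec, Matrix.dotProduct_mulVec, Matrix.star_mulVec]
  rw [h1]
  simp only [dotProduct, Pi.star_apply, Complex.re_sum]
  refine Finset.sum_congr rfl fun j _ => ?_
  rw [mul_comm, Complex.star_def, Complex.mul_conj']
  norm_cast

/-- Randomized reduction: Let `U`, `Ũ` be unitaries on a `d`-dimensional
Hilbert space with `‖Ũ − U‖_F² / d ≤ ε`, and let `(p, V)` be a unitary 1-design
(`E_V[V X V†] = (Tr X / d) · I`). With `V̂ = U V U†`, for every unit vector `ψ`,
`E_V[‖V̂† Ũ V ψ − U ψ‖²] ≤ ε`. -/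
theorem stmt4 {n : ℕ} (hn : 0 < n)
    (U Ut : Matrix (Fin n) (Fin n) ℂ)
    (hU : U ∈ Matrix.unitaryGroup (Fin n) ℂ)
    (hUt : Ut ∈ Matrix.unitaryGroup (Fin n) ℂ)
    (ε : ℝ) (hε : 0 < ε)
    (hfrob : ((Ut - U)ᴴ * (Ut - U)).trace.re ≤ ε * n)
    {ι : Type*} [Fintype ι] (p : ι → ℝ) (hp : ∀ i, 0 ≤ p i) (hp1 : ∑ i, p i = 1)
    (V : ι → Matrix (Fin n) (Fin n) ℂ)
    (hV : ∀ i, V i ∈ Matrix.unitaryGroup (Fin n) ℂ)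
    (hdesign : ∀ X : Matrix (Fin n) (Fin n) ℂ,
      ∑ i, (p i : ℂ) • (V i * X * (V i)ᴴ) = (X.trace / n) • (1 : Matrix (Fin n) (Fin n) ℂ))
    (ψ : Fin n → ℂ) (hψ : ∑ j, ‖ψ j‖ ^ 2 = 1) :
    ∑ i, p i *
        (∑ j, ‖((U * V i * Uᴴ)ᴴ * Ut * V i).mulVec ψ j - U.mulVec ψ j‖ ^ 2) ≤ ε := by
  have hn' : (0:ℝ) < n := by exact_mod_cast hn
  set D := Ut - U with hD
  set M := Dᴴ * D with hM
  set P := vecMulVec ψ (star ψ) with hP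
  -- unitarity cancellation lemmas
  have cUl : ∀ X : Matrix (Fin n) (Fin n) ℂ, Uᴴ * (U * X) = X := fun X => by
    rw [← Matrix.mul_assoc, ← Matrix.star_eq_conjTranspose, hU.1, Matrix.one_mul]
  have cUr : ∀ X : Matrix (Fin n) (Fin n) ℂ, U * (Uᴴ * X) = X := fun X => by
    rw [← Matrix.mul_assoc, ← Matrix.star_eq_conjTranspose, hU.2, Matrix.one_mul]
  have cVl : ∀ i, ∀ X : Matrix (Fin n) (Fin n) ℂ, (V i)ᴴ * (V i * X) = X := fun i X => by
    rw [← Matrix.mul_assoc, ← Matrix.star_eq_conjTranspose, (hV i).1, Matrix.one_mul]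
  have cVr : ∀ i, ∀ X : Matrix (Fin n) (Fin n) ℂ, V i * ((V i)ᴴ * X) = X := fun i X => by
    rw [← Matrix.mul_assoc, ← Matrix.star_eq_conjTranspose, (hV i).2, Matrix.one_mul]
  have hVV : ∀ i, (V i)ᴴ * (V i) = 1 := fun i => by
    rw [← Matrix.star_eq_conjTranspose]; exact (hV i).1
  -- per-index key identity
  have key : ∀ i, ((U * V i * Uᴴ)ᴴ * Ut * V i - U)ᴴ * ((U * V i * Uᴴ)ᴴ * Ut * V i - U)
      = (V i)ᴴ * M * V i := by
    intro i
    have hC : (U * V i * Uᴴ)ᴴ * Ut * V i - U = U * ((V i)ᴴ * (Uᴴ * (D * V i))) := by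
      rw [hD]
      simp only [Matrix.conjTranspose_mul, Matrix.conjTranspose_conjTranspose,
        Matrix.sub_mul, Matrix.mul_sub, Matrix.mul_assoc, cUl]
      rw [hVV i, Matrix.mul_one]
    rw [hC]
    simp only [Matrix.conjTranspose_mul, Matrix.conjTranspose_conjTranspose,
      Matrix.mul_assoc, cUl, cUr, cVl, cVr]
    simp [hM, Matrix.mul_assoc]
  -- rewrite each inner sum as a trace
  have inner_eq : ∀ i, (∑ j, ‖((U * V i * Uᴴ)ᴴ * Ut * V i).mulVec ψ j - U.mulVec ψ j‖ ^ 2)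
      = ((M * (V i * P * (V i)ᴴ)).trace).re := by
    intro i
    have h1 : ∀ j, ((U * V i * Uᴴ)ᴴ * Ut * V i).mulVec ψ j - U.mulVec ψ j
        = ((U * V i * Uᴴ)ᴴ * Ut * V i - U).mulVec ψ j := fun j => by
      rw [Matrix.sub_mulVec]; rfl
    simp only [h1]
    rw [norm_sq_mulVec, key i, ← trace_mul_vecMulVec, ← hP]
    congr 1
    rw [show ((V i)ᴴ * M * V i) * P = (V i)ᴴ * (M * (V i * P)) by simp [Matrix.mul_assoc],
      Matrix.trace_mul_comm]
    congr 1
    simp [Matrix.mul_assoc]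
  -- trace of P is 1
  have hPtr : P.trace = 1 := by
    have : P.trace = ∑ j, ψ j * star (ψ j) := by
      simp [hP, Matrix.trace, Matrix.diag, vecMulVec_apply]
    rw [this]
    have : ∀ j, ψ j * star (ψ j) = ((‖ψ j‖ ^ 2 : ℝ) : ℂ) := fun j => by
      rw [Complex.star_def, Complex.mul_conj']; norm_cast
    simp only [this, ← Complex.ofReal_sum, hψ, Complex.ofReal_one]
  -- the expectation as a single trace
  have expect : ∑ i, (p i : ℂ) * (M * (V i * P * (V i)ᴴ)).trace
      = (P.trace / n) * M.trace := by
    have : ∑ i, (p i : ℂ) * (M * (V i * P * (V i)ᴴ)).trace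
        = (M * ∑ i, (p i : ℂ) • (V i * P * (V i)ᴴ)).trace := by
      rw [Finset.mul_sum, Matrix.trace_sum]
      simp [Matrix.mul_smul, Matrix.trace_smul, smul_eq_mul]
    rw [this, hdesign P]
    simp [Matrix.mul_smul, Matrix.trace_smul, smul_eq_mul]
  calc ∑ i, p i * (∑ j, ‖((U * V i * Uᴴ)ᴴ * Ut * V i).mulVec ψ j - U.mulVec ψ j‖ ^ 2)
      = (∑ i, (p i : ℂ) * (M * (V i * P * (V i)ᴴ)).trace).re := by
        rw [Complex.re_sum]
        exact Finset.sum_congr rfl fun i _ => by rw [inner_eq i, Complex.re_ofReal_mul]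
    _ = ((P.trace / n) * M.trace).re := by rw [expect]
    _ = (1 / (n:ℝ)) * M.trace.re := by
        rw [hPtr]
        rw [show (1 : ℂ) / (n:ℂ) = ((1 / (n:ℝ) : ℝ) : ℂ) by push_cast; ring]
        rw [Complex.re_ofReal_mul]
    _ ≤ (1 / (n:ℝ)) * (ε * n) := by
        apply mul_le_mul_of_nonneg_left _ (by positivity)
        exact hfrob
    _ = ε := by field_simp
end

section
/- Let {V_1, …, V_k} be a finite set of unitaries on H whose uniform distribution forms a unitary 1-design, and suppose ‖Ũ − U‖_F² / dim H ≤ ε for unitaries U, Ũ on H. Define on C^k ⊗ H the unitaries V' = Σ_i |i⟩⟨i| ⊗ V_i, V̂' = Σ_i |i⟩⟨i| ⊗ U V_i U†, and U' = V̂'† (I ⊗ Ũ) V'. Then for every unit vector ψ ∈ H, ‖(U' − I ⊗ U)((1/√k) Σ_i |i⟩ ⊗ ψ)‖² ≤ ε. -/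
/-! On the block `|i⟩ ⊗ H` the operator `U' - I ⊗ U` acts as `V̂_iᴴ (Ũ - U) V_i`, because
`V̂_iᴴ U V_i = U`. As `V̂_i` is unitary, the error is therefore the average over `i` of
`‖(Ũ - U) V_i ψ‖² = tr ((Ũ - U)ᴴ (Ũ - U) V_i |ψ⟩⟨ψ| V_iᴴ)`, and the 1-design property replaces the
average of `V_i |ψ⟩⟨ψ| V_iᴴ` by `I / n`, leaving `‖Ũ - U‖_F² / n ≤ ε`. -/

open Matrix Finset

/-- The block-diagonal operator `∑ i |i⟩⟨i| ⊗ W i` on `C^k ⊗ C^n`. -/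
def ctrlOp {k n : ℕ} (W : Fin k → Matrix (Fin n) (Fin n) ℂ) :
    Matrix (Fin k × Fin n) (Fin k × Fin n) ℂ :=
  fun p q => if p.1 = q.1 then W p.1 p.2 q.2 else 0

theorem Unitary.star_conj_mul_mul_sub {R : Type*} [Ring R] [StarRing R] {u w : R}
    (hu : u ∈ unitary R) (hw : w ∈ unitary R) (v : R) :
    star (u * w * star u) * v * w - u = star (u * w * star u) * (v - u) * w := by
  simp only [star_mul, star_star, mul_sub, sub_mul, mul_assoc, Unitary.star_mul_self_of_mem hu,
    mul_one, Unitary.star_mul_self_of_mem hw]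

namespace Matrix

variable {m n R : Type*} [Fintype n]

section CommRing

variable [CommRing R] [StarRing R]

theorem star_mulVec_dotProduct_mulVec [Fintype m] (A : Matrix m n R) (x : n → R) :
    star (A *ᵥ x) ⬝ᵥ (A *ᵥ x) = star x ⬝ᵥ (Aᴴ * A) *ᵥ x := by
  rw [← mulVec_mulVec, dotProduct_mulVec (star x) Aᴴ, star_mulVec]

theorem star_mulVec_dotProduct_mulVec_of_mem_unitaryGroup [DecidableEq n] {P : Matrix n n R}
    (hP : P ∈ unitaryGroup n R) (x : n → R) : star (P *ᵥ x) ⬝ᵥ (P *ᵥ x) = star x ⬝ᵥ x := by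
  rw [star_mulVec_dotProduct_mulVec, ← star_eq_conjTranspose,
    Unitary.star_mul_self_of_mem hP, one_mulVec]

theorem star_dotProduct_mulVec_eq_trace (B : Matrix n n R) (x : n → R) :
    star x ⬝ᵥ B *ᵥ x = trace (B * vecMulVec x (star x)) := by
  rw [mul_vecMulVec, trace_vecMulVec, dotProduct_comm]

theorem vecMulVec_mulVec_star_mulVec (A : Matrix m n R) (x : n → R) :
    vecMulVec (A *ᵥ x) (star (A *ᵥ x)) = A * vecMulVec x (star x) * Aᴴ := by
  rw [mul_vecMulVec, vecMulVec_mul, star_mulVec]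

end CommRing

theorem star_dotProduct_self_eq_sum_norm_sq {𝕜 : Type*} [RCLike 𝕜] (x : n → 𝕜) :
    star x ⬝ᵥ x = ((∑ j, ‖x j‖ ^ 2 : ℝ) : 𝕜) := by
  simp only [dotProduct, Pi.star_apply, RCLike.star_def, RCLike.conj_mul]
  push_cast
  rfl

theorem sum_norm_sq_eq_re_star_dotProduct {𝕜 : Type*} [RCLike 𝕜] (x : n → 𝕜) :
    ∑ j, ‖x j‖ ^ 2 = RCLike.re (star x ⬝ᵥ x) := by
  rw [star_dotProduct_self_eq_sum_norm_sq, RCLike.ofReal_re]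

theorem sum_star_mulVec_dotProduct_mulVec_of_design {𝕜 : Type*} [Field 𝕜] [StarRing 𝕜]
    {n k : ℕ} (hk : (k : 𝕜) ≠ 0) (V : Fin k → Matrix (Fin n) (Fin n) 𝕜)
    (hdesign : ∀ X : Matrix (Fin n) (Fin n) 𝕜,
      ((k : 𝕜))⁻¹ • ∑ i, (V i * X * (V i)ᴴ) = (X.trace / n) • (1 : Matrix (Fin n) (Fin n) 𝕜))
    (B : Matrix (Fin n) (Fin n) 𝕜) (ψ : Fin n → 𝕜) :
    ∑ i, star (V i *ᵥ ψ) ⬝ᵥ B *ᵥ (V i *ᵥ ψ) = k * ((ψ ⬝ᵥ star ψ) / n) * B.trace := by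
  have hsum : ∑ i, V i * vecMulVec ψ (star ψ) * (V i)ᴴ
      = (k : 𝕜) • ((ψ ⬝ᵥ star ψ) / n) • (1 : Matrix (Fin n) (Fin n) 𝕜) := by
    rw [← trace_vecMulVec, ← hdesign, smul_inv_smul₀ hk]
  simp only [star_dotProduct_mulVec_eq_trace, vecMulVec_mulVec_star_mulVec]
  rw [← trace_sum, ← mul_sum, hsum, mul_smul_comm, mul_smul_comm, mul_one, trace_smul, trace_smul,
    smul_eq_mul, smul_eq_mul, mul_assoc]

end Matrix

section ctrlOp

variable {k n : ℕ}

theorem ctrlOp_mul (W W' : Fin k → Matrix (Fin n) (Fin n) ℂ) :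
    ctrlOp W * ctrlOp W' = ctrlOp (fun i => W i * W' i) := by
  ext ⟨i, j⟩ ⟨i', j'⟩
  by_cases h : i = i' <;> simp [ctrlOp, mul_apply, Fintype.sum_prod_type, h]

theorem ctrlOp_conjTranspose (W : Fin k → Matrix (Fin n) (Fin n) ℂ) :
    (ctrlOp W)ᴴ = ctrlOp (fun i => (W i)ᴴ) := by
  ext ⟨i, j⟩ ⟨i', j'⟩
  by_cases h : i = i' <;> simp [ctrlOp, h, eq_comm]

theorem ctrlOp_sub (W W' : Fin k → Matrix (Fin n) (Fin n) ℂ) :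
    ctrlOp W - ctrlOp W' = ctrlOp (fun i => W i - W' i) := by
  ext ⟨i, j⟩ ⟨i', j'⟩
  by_cases h : i = i' <;> simp [ctrlOp, h]

theorem ctrlOp_mulVec_apply (W : Fin k → Matrix (Fin n) (Fin n) ℂ) (v : Fin k × Fin n → ℂ)
    (i : Fin k) (j : Fin n) : (ctrlOp W *ᵥ v) (i, j) = (W i *ᵥ fun j' => v (i, j')) j := by
  simp [mulVec, dotProduct, Fintype.sum_prod_type, ctrlOp]

theorem sum_norm_sq_ctrlOp_mulVec (W : Fin k → Matrix (Fin n) (Fin n) ℂ) (a : ℂ)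
    (ψ : Fin n → ℂ) :
    ∑ q, ‖(ctrlOp W *ᵥ fun p => a * ψ p.2) q‖ ^ 2 = ‖a‖ ^ 2 * ∑ i, ∑ j, ‖(W i *ᵥ ψ) j‖ ^ 2 := by
  simp only [Fintype.sum_prod_type, ctrlOp_mulVec_apply, mul_sum]
  congr! with i _ j _
  rw [show (fun j' => a * ψ j') = a • ψ from rfl, mulVec_smul, Pi.smul_apply, smul_eq_mul,
    norm_mul, mul_pow]

end ctrlOp

theorem stmt5_general {n k : ℕ} (hn : 0 < n) (hk : 0 < k)
    (U Ut : Matrix (Fin n) (Fin n) ℂ)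
    (hU : U ∈ Matrix.unitaryGroup (Fin n) ℂ)
    (ε : ℝ)
    (hfrob : ((Ut - U)ᴴ * (Ut - U)).trace.re ≤ ε * n)
    (V : Fin k → Matrix (Fin n) (Fin n) ℂ)
    (hV : ∀ i, V i ∈ Matrix.unitaryGroup (Fin n) ℂ)
    (hdesign : ∀ X : Matrix (Fin n) (Fin n) ℂ,
      ((k : ℂ))⁻¹ • ∑ i, (V i * X * (V i)ᴴ) =
        (X.trace / n) • (1 : Matrix (Fin n) (Fin n) ℂ))
    (ψ : Fin n → ℂ) (hψ : ∑ j, ‖ψ j‖ ^ 2 = 1) :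
    ∑ q : Fin k × Fin n,
      ‖(((ctrlOp (fun i => U * V i * Uᴴ))ᴴ * ctrlOp (fun _ => Ut) * ctrlOp V
          - ctrlOp (fun _ => U)).mulVec
          (fun p => (1 / Real.sqrt k : ℝ) * ψ p.2)) q‖ ^ 2 ≤ ε := by
  have hblocks : (ctrlOp fun i => U * V i * Uᴴ)ᴴ * ctrlOp (fun _ => Ut) * ctrlOp V
      - ctrlOp (fun _ => U) = ctrlOp fun i => (U * V i * Uᴴ)ᴴ * (Ut - U) * V i := by
    simp only [ctrlOp_conjTranspose, ctrlOp_mul, ctrlOp_sub]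
    congr with i : 1
    exact Unitary.star_conj_mul_mul_sub hU (hV i) Ut
  have hblock_norm (i : Fin k) : ∑ j, ‖(((U * V i * Uᴴ)ᴴ * (Ut - U) * V i) *ᵥ ψ) j‖ ^ 2
      = (star (V i *ᵥ ψ) ⬝ᵥ (((Ut - U)ᴴ * (Ut - U)) *ᵥ (V i *ᵥ ψ))).re := by
    have hP : (U * V i * Uᴴ)ᴴ ∈ unitaryGroup (Fin n) ℂ :=
      Unitary.star_mem (mul_mem (mul_mem hU (hV i)) (Unitary.star_mem hU))
    rw [sum_norm_sq_eq_re_star_dotProduct, ← mulVec_mulVec, ← mulVec_mulVec,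
      star_mulVec_dotProduct_mulVec_of_mem_unitaryGroup hP, star_mulVec_dotProduct_mulVec]
    rfl
  have hψ' : ψ ⬝ᵥ star ψ = 1 := by
    rw [dotProduct_comm, star_dotProduct_self_eq_sum_norm_sq, hψ, RCLike.ofReal_one]
  have hkC : (k : ℂ) ≠ 0 := by exact_mod_cast hk.ne'
  calc _ = (1 / k : ℝ) * ((k : ℂ) * (1 / n) * ((Ut - U)ᴴ * (Ut - U)).trace).re := by
        rw [hblocks, sum_norm_sq_ctrlOp_mulVec]
        simp only [hblock_norm, ← Complex.re_sum,
          sum_star_mulVec_dotProduct_mulVec_of_design hkC V hdesign, hψ', Complex.norm_real,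
          Real.norm_eq_abs, sq_abs, div_pow, one_pow, Real.sq_sqrt k.cast_nonneg]
    _ = ((Ut - U)ᴴ * (Ut - U)).trace.re / n := by
        rw [show (k : ℂ) * (1 / n) = ((k / n : ℝ) : ℂ) by push_cast; ring, Complex.re_ofReal_mul]
        field_simp
    _ ≤ ε := by rwa [div_le_iff₀ (by exact_mod_cast hn)]

/-- Derandomized reduction: If the uniform distribution over unitaries
`V_1, …, V_k` is a unitary 1-design and `‖Ũ − U‖_F² / n ≤ ε`, then with
`V' = ∑ i |i⟩⟨i| ⊗ V i`, `V̂' = ∑ i |i⟩⟨i| ⊗ U V_i U†`, and `U' = V̂'† (I ⊗ Ũ) V'`,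
the error of `U'` on `(1/√k) ∑ i |i⟩ ⊗ ψ` is at most `ε` for every unit vector `ψ`. -/
theorem stmt5 {n k : ℕ} (hn : 0 < n) (hk : 0 < k)
    (U Ut : Matrix (Fin n) (Fin n) ℂ)
    (hU : U ∈ Matrix.unitaryGroup (Fin n) ℂ)
    (hUt : Ut ∈ Matrix.unitaryGroup (Fin n) ℂ)
    (ε : ℝ) (hε : 0 < ε)
    (hfrob : ((Ut - U)ᴴ * (Ut - U)).trace.re ≤ ε * n)
    (V : Fin k → Matrix (Fin n) (Fin n) ℂ)
    (hV : ∀ i, V i ∈ Matrix.unitaryGroup (Fin n) ℂ)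
    (hdesign : ∀ X : Matrix (Fin n) (Fin n) ℂ,
      ((k : ℂ))⁻¹ • ∑ i, (V i * X * (V i)ᴴ) =
        (X.trace / n) • (1 : Matrix (Fin n) (Fin n) ℂ))
    (ψ : Fin n → ℂ) (hψ : ∑ j, ‖ψ j‖ ^ 2 = 1) :
    ∑ q : Fin k × Fin n,
      ‖(((ctrlOp (fun i => U * V i * Uᴴ))ᴴ * ctrlOp (fun _ => Ut) * ctrlOp V
          - ctrlOp (fun _ => U)).mulVec
          (fun p => (1 / Real.sqrt k : ℝ) * ψ p.2)) q‖ ^ 2 ≤ ε :=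
  stmt5_general hn hk U Ut hU ε hfrob V hV hdesign ψ hψ
end

section
/- Let QFT be the exact quantum Fourier transform on n qubits and QFT' the blockwise approximate QFT with block size m (which, for each block i of m qubits, applies the phase e^{2πi(X_i + X_{i+1}/2^m)Y_i/2^m} instead of the full phase e^{2πi(Σ_{j≥i} X_j/2^{m(j−i)})Y_i/2^m}). Then (1/2^n)‖QFT' − QFT‖_F² ≤ (4π²/3) · ⌈n/m⌉ · 2^{−m}. -/
open Finset Complex

/-- Exact blockwise QFT amplitude: for input block values `X` and output block values
`Y` (each block is an `m`-bit integer), the amplitude of `|Y⟩` in `QFT|X⟩` is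
`∏_i 2^{-m/2} e^{2πi (∑_{j≥i} X_j 2^{-m(j-i)}) Y_i / 2^m}`. -/
noncomputable def qftBlockAmp (m K : ℕ) (X Y : Fin K → Fin (2 ^ m)) : ℂ :=
  ∏ i : Fin K,
    ((1 / Real.sqrt (2 ^ m) : ℝ) *
      Complex.exp (2 * Real.pi * Complex.I *
        (∑ j ∈ Finset.Ico (i : ℕ) K,
          if h : j < K then ((X ⟨j, h⟩ : ℕ) : ℝ) / 2 ^ (m * (j - (i : ℕ))) else 0) *
        (Y i : ℕ) / 2 ^ m))

/-- Blockwise approximate QFT amplitude: only the terms `X_i + X_{i+1}/2^m` of the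
phase are kept (`X_j = 0` for out-of-range `j`). -/
noncomputable def aqftBlockAmp (m K : ℕ) (X Y : Fin K → Fin (2 ^ m)) : ℂ :=
  ∏ i : Fin K,
    ((1 / Real.sqrt (2 ^ m) : ℝ) *
      Complex.exp (2 * Real.pi * Complex.I *
        (((X i : ℕ) : ℝ) +
          (if h : (i : ℕ) + 1 < K then ((X ⟨(i : ℕ) + 1, h⟩ : ℕ) : ℝ) else 0) / 2 ^ m) *
        (Y i : ℕ) / 2 ^ m))

/-!
Each amplitude is `(2^{-m/2})^K e^{iθ}` with `θ = ∑ᵢ 2π sᵢ Yᵢ / 2^m`, where `sᵢ` is the phase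
coefficient of block `i`. The exact and approximate coefficients differ by the tail
`∑_{j ≥ i+2} X_j 2^{-m(j-i)} ∈ [0, 2^{-m}]`, so the two total phases differ by at most
`2πK / 2^m`. Since `|e^{iθ} - e^{iθ'}| ≤ min 2 |θ - θ'|`, its square is at most `2 |θ - θ'|`;
summing over the `4^n` pairs `(X, Y)` bounds the average error by `4πK 2^{-m}`, which is below
`(4π²/3) K 2^{-m}` because `π > 3`.
-/

lemma norm_exp_I_mul_sub_exp_I_mul_le (a b : ℝ) :
    ‖exp (I * a) - exp (I * b)‖ ≤ |a - b| := by
  have hfactor : exp (I * a) - exp (I * b) = exp (I * b) * (exp (I * ↑(a - b)) - 1) := by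
    rw [mul_sub, mul_one, ← exp_add]; push_cast; ring_nf
  rw [hfactor, norm_mul, norm_exp_I_mul_ofReal, one_mul, ← Real.norm_eq_abs]
  exact Real.norm_exp_I_mul_ofReal_sub_one_le

lemma norm_exp_I_mul_sub_exp_I_mul_sq_le (a b : ℝ) :
    ‖exp (I * a) - exp (I * b)‖ ^ 2 ≤ 2 * |a - b| := by
  have hle_two : ‖exp (I * a) - exp (I * b)‖ ≤ 2 :=
    (norm_sub_le _ _).trans (by rw [norm_exp_I_mul_ofReal, norm_exp_I_mul_ofReal]; norm_num)
  rw [sq]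
  exact mul_le_mul hle_two (norm_exp_I_mul_sub_exp_I_mul_le a b) (norm_nonneg _) zero_le_two

lemma norm_prod_sub_prod_sq_le {ι : Type*} (s : Finset ι) (c : ℝ) (a b : ι → ℝ) :
    ‖∏ i ∈ s, (c : ℂ) * exp (I * a i) - ∏ i ∈ s, (c : ℂ) * exp (I * b i)‖ ^ 2 ≤
      (c ^ 2) ^ #s * (2 * ∑ i ∈ s, |a i - b i|) := by
  simp only [prod_mul_distrib, prod_const, ← exp_sum, ← mul_sum, ← ofReal_sum]
  rw [← mul_sub, norm_mul, mul_pow, norm_pow, norm_real, Real.norm_eq_abs, ← pow_mul,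
    mul_comm #s 2, pow_mul, sq_abs]
  gcongr
  refine (norm_exp_I_mul_sub_exp_I_mul_sq_le _ _).trans ?_
  rw [← sum_sub_distrib]
  exact mul_le_mul_of_nonneg_left (abs_sum_le_sum_abs (fun i => a i - b i) s) zero_le_two

lemma sum_range_div_pow_add_two_le {N : ℝ} (hN : 1 ≤ N) {y : ℕ → ℝ}
    (hy : ∀ k, y k ≤ N - 1) (L : ℕ) : ∑ k ∈ range L, y k / N ^ (k + 2) ≤ 1 / N := by
  have hN0 : 0 < N := by linarith
  have htelescope : ∀ k : ℕ,
      (N - 1) / N ^ (k + 2) = 1 / N ^ (k + 1) - 1 / N ^ (k + 1 + 1) := by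
    intro k; field_simp; ring
  calc ∑ k ∈ range L, y k / N ^ (k + 2)
      ≤ ∑ k ∈ range L, (1 / N ^ (k + 1) - 1 / N ^ (k + 1 + 1)) := by
        gcongr with k; rw [← htelescope]; gcongr; exact hy k
    _ = 1 / N - 1 / N ^ (L + 1) := by rw [sum_range_sub' (fun k => 1 / N ^ (k + 1))]; simp
    _ ≤ 1 / N := by
        have : 0 < 1 / N ^ (L + 1) := by positivity
        linarith

lemma abs_sum_range_div_pow_sub_le {N : ℝ} (hN : 1 ≤ N) {y : ℕ → ℝ}
    (hy0 : ∀ k, 0 ≤ y k) (hy : ∀ k, y k ≤ N - 1) {L : ℕ} (hyL : ∀ k, L ≤ k → y k = 0) :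
    |∑ k ∈ range L, y k / N ^ k - (y 0 + y 1 / N)| ≤ 1 / N := by
  -- Padding with two zero terms makes the tail `∑_{k ≥ 2}` well-formed even when `L < 2`.
  have hext : ∑ k ∈ range L, y k / N ^ k = ∑ k ∈ range (L + 2), y k / N ^ k :=
    sum_subset (range_subset_range.2 (by omega)) fun k _ hk => by
      simp [hyL k (by simpa using hk)]
  rw [hext, sum_range_succ', sum_range_succ']
  simp only [zero_add, pow_zero, div_one, pow_one]
  rw [show ∀ t u v : ℝ, t + u + v - (v + u) = t from fun _ _ _ => by ring,
    abs_of_nonneg (sum_nonneg fun k _ => div_nonneg (hy0 _) (by positivity))]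
  exact sum_range_div_pow_add_two_le hN (fun k => hy (k + 2)) L

section Blocks

variable {m K : ℕ}

noncomputable def blockSeq (X : Fin K → Fin (2 ^ m)) (j : ℕ) : ℝ :=
  if h : j < K then ((X ⟨j, h⟩ : ℕ) : ℝ) else 0

lemma blockSeq_nonneg (X : Fin K → Fin (2 ^ m)) (j : ℕ) : 0 ≤ blockSeq X j := by
  unfold blockSeq; split <;> positivity

lemma blockSeq_le (X : Fin K → Fin (2 ^ m)) (j : ℕ) : blockSeq X j ≤ 2 ^ m - 1 := by
  unfold blockSeq
  split
  · next h =>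
    have hlt : ((X ⟨j, h⟩ : ℕ) : ℝ) + 1 ≤ 2 ^ m := by exact_mod_cast (X ⟨j, h⟩).isLt
    linarith
  · simp [one_le_pow₀ (one_le_two : (1 : ℝ) ≤ 2)]

lemma blockSeq_of_le (X : Fin K → Fin (2 ^ m)) {j : ℕ} (hj : K ≤ j) : blockSeq X j = 0 :=
  dif_neg (by omega)

noncomputable def exactPhase (X : Fin K → Fin (2 ^ m)) (i : ℕ) : ℝ :=
  ∑ k ∈ range (K - i), blockSeq X (i + k) / (2 ^ m) ^ k

noncomputable def approxPhase (X : Fin K → Fin (2 ^ m)) (i : ℕ) : ℝ :=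
  blockSeq X i + blockSeq X (i + 1) / 2 ^ m

lemma abs_approxPhase_sub_exactPhase_le (X : Fin K → Fin (2 ^ m)) (i : ℕ) :
    |approxPhase X i - exactPhase X i| ≤ 1 / 2 ^ m := by
  rw [abs_sub_comm, approxPhase, exactPhase]
  exact abs_sum_range_div_pow_sub_le (one_le_pow₀ one_le_two) (fun k => blockSeq_nonneg X _)
    (fun k => blockSeq_le X _) (fun k hk => blockSeq_of_le X (by omega))

lemma qftBlockAmp_eq (X Y : Fin K → Fin (2 ^ m)) :
    qftBlockAmp m K X Y = ∏ i : Fin K, ((1 / Real.sqrt (2 ^ m) : ℝ) : ℂ) *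
      exp (I * ↑(2 * Real.pi * exactPhase X (i : ℕ) * (Y i : ℕ) / 2 ^ m)) := by
  refine prod_congr rfl fun i _ => ?_
  have hphase : ∑ j ∈ Ico (i : ℕ) K,
      (if h : j < K then ((X ⟨j, h⟩ : ℕ) : ℝ) / 2 ^ (m * (j - (i : ℕ))) else 0) =
      exactPhase X i := by
    rw [exactPhase, sum_Ico_eq_sum_range]
    refine sum_congr rfl fun k _ => ?_
    rw [blockSeq, add_tsub_cancel_left, pow_mul]
    split <;> simp
  rw [hphase]; push_cast; ring_nf

lemma aqftBlockAmp_eq (X Y : Fin K → Fin (2 ^ m)) :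
    aqftBlockAmp m K X Y = ∏ i : Fin K, ((1 / Real.sqrt (2 ^ m) : ℝ) : ℂ) *
      exp (I * ↑(2 * Real.pi * approxPhase X (i : ℕ) * (Y i : ℕ) / 2 ^ m)) := by
  refine prod_congr rfl fun i _ => ?_
  simp only [approxPhase, blockSeq, dif_pos i.isLt]
  push_cast; ring_nf

lemma abs_blockPhase_sub_le (X : Fin K → Fin (2 ^ m)) (i : ℕ) (y : Fin (2 ^ m)) :
    |2 * Real.pi * approxPhase X i * (y : ℕ) / 2 ^ m -
      2 * Real.pi * exactPhase X i * (y : ℕ) / 2 ^ m| ≤ 2 * Real.pi / 2 ^ m := by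
  have hy : ((y : ℕ) : ℝ) / 2 ^ m ≤ 1 :=
    div_le_one_of_le₀ (by exact_mod_cast y.isLt.le) (by positivity)
  rw [show ∀ a e t : ℝ, 2 * Real.pi * a * t / 2 ^ m - 2 * Real.pi * e * t / 2 ^ m =
      2 * Real.pi * ((a - e) * (t / 2 ^ m)) from fun _ _ _ => by ring,
    abs_mul, abs_of_pos Real.two_pi_pos, abs_mul,
    abs_of_nonneg (by positivity : (0 : ℝ) ≤ (y : ℕ) / 2 ^ m)]
  calc 2 * Real.pi * (|approxPhase X i - exactPhase X i| * ((y : ℕ) / 2 ^ m))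
      ≤ 2 * Real.pi * (1 / 2 ^ m * 1) := by
        gcongr
        exact abs_approxPhase_sub_exactPhase_le X i
    _ = 2 * Real.pi / 2 ^ m := by ring

lemma norm_aqftBlockAmp_sub_qftBlockAmp_sq_le (X Y : Fin K → Fin (2 ^ m)) :
    ‖aqftBlockAmp m K X Y - qftBlockAmp m K X Y‖ ^ 2 ≤
      (1 / 2 ^ m) ^ K * (4 * Real.pi * K / 2 ^ m) := by
  rw [aqftBlockAmp_eq, qftBlockAmp_eq]
  refine (norm_prod_sub_prod_sq_le _ _ _ _).trans ?_
  rw [card_univ, Fintype.card_fin, div_pow, one_pow, Real.sq_sqrt (by positivity)]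
  gcongr
  calc 2 * ∑ i : Fin K, |2 * Real.pi * approxPhase X (i : ℕ) * (Y i : ℕ) / 2 ^ m -
        2 * Real.pi * exactPhase X (i : ℕ) * (Y i : ℕ) / 2 ^ m|
      ≤ 2 * ∑ _i : Fin K, 2 * Real.pi / 2 ^ m := by
        gcongr with i
        exact abs_blockPhase_sub_le X i (Y i)
    _ = 4 * Real.pi * K / 2 ^ m := by
        simp only [sum_const, card_univ, Fintype.card_fin, nsmul_eq_mul]
        ring

end Blocks

theorem stmt9_general (n m : ℕ) (hdvd : m ∣ n) :
    (1 / (2 ^ n : ℝ)) *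
      ∑ X : Fin (n / m) → Fin (2 ^ m), ∑ Y : Fin (n / m) → Fin (2 ^ m),
        ‖aqftBlockAmp m (n / m) X Y - qftBlockAmp m (n / m) X Y‖ ^ 2 ≤
    (4 * Real.pi ^ 2 / 3) * (n / m : ℕ) * (1 / 2 ^ m : ℝ) := by
  have hblocks : m * (n / m) = n := Nat.mul_div_cancel' hdvd
  have hcard : (Fintype.card (Fin (n / m) → Fin (2 ^ m)) : ℝ) = 2 ^ n := by
    rw [Fintype.card_fun, Fintype.card_fin, Fintype.card_fin, ← pow_mul, hblocks]
    norm_cast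
  calc (1 / (2 ^ n : ℝ)) *
        ∑ X : Fin (n / m) → Fin (2 ^ m), ∑ Y : Fin (n / m) → Fin (2 ^ m),
          ‖aqftBlockAmp m (n / m) X Y - qftBlockAmp m (n / m) X Y‖ ^ 2
      ≤ (1 / (2 ^ n : ℝ)) *
        ∑ _X : Fin (n / m) → Fin (2 ^ m), ∑ _Y : Fin (n / m) → Fin (2 ^ m),
          (1 / 2 ^ m) ^ (n / m) * (4 * Real.pi * (n / m : ℕ) / 2 ^ m) := by
        gcongr with X _ Y _
        exact norm_aqftBlockAmp_sub_qftBlockAmp_sq_le X Y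
    _ = 4 * Real.pi * (n / m : ℕ) * (1 / 2 ^ m) := by
        rw [sum_const, sum_const, card_univ, nsmul_eq_mul, nsmul_eq_mul, hcard, div_pow, one_pow,
          ← pow_mul, hblocks]
        field_simp
    _ ≤ (4 * Real.pi ^ 2 / 3) * (n / m : ℕ) * (1 / 2 ^ m : ℝ) := by
        gcongr
        nlinarith [Real.pi_gt_three]

/-- For the exact QFT and the blockwise approximate QFT with block size
`m` on `n` qubits (divided into `K = n/m` blocks), the average squared Frobenius error
satisfies `(1/2^n) ‖QFT' − QFT‖_F² ≤ (4π²/3) ⌈n/m⌉ 2^{−m}`. -/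
theorem stmt9 (n m : ℕ) (hm : 0 < m) (hmn : m ≤ n) (hdvd : m ∣ n) :
    (1 / (2 ^ n : ℝ)) *
      ∑ X : Fin (n / m) → Fin (2 ^ m), ∑ Y : Fin (n / m) → Fin (2 ^ m),
        ‖aqftBlockAmp m (n / m) X Y - qftBlockAmp m (n / m) X Y‖ ^ 2 ≤
    (4 * Real.pi ^ 2 / 3) * (n / m : ℕ) * (1 / 2 ^ m : ℝ) :=
  stmt9_general n m hdvd
end
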